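/- arXiv:2604.02866 — 2 statements merged into one kernel-verified Lean document; each statement's English description precedes it below -/
import Mathlib

section
/- Generalised indivisibility of disjunction: let D₁, …, D_k be propositional formulas over V and let S be a nonempty proper subset of {1, …, k}. If there exist an index j ∉ S and a world w such that w ⊨ D_j and w ⊭ D_i for every i ∈ S, then I(⋁_{i∈S} D_i) > I(D₁ ∨ ⋯ ∨ D_k); that is, extracting any such proper sub-disjunction from the full disjunction is a bad cut. -/
/-- Propositional formulas over atoms `V`: `var v | ¬φ | φ ∧ φ | φ ∨ φ`. -/
inductive PropForm (V : Type*) where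
  | var : V → PropForm V
  | not : PropForm V → PropForm V
  | and : PropForm V → PropForm V → PropForm V
  | or  : PropForm V → PropForm V → PropForm V

namespace PropForm

variable {V : Type*}

/-- Boolean semantics: `w ⊨ φ`. -/
def eval (w : V → Bool) : PropForm V → Bool
  | var v => w v
  | not φ => !(eval w φ)
  | and φ ψ => eval w φ && eval w ψ
  | or φ ψ => eval w φ || eval w ψ

end PropForm

variable {V : Type*}

/-- `Content φ` : the finite set of worlds (valuations `V → Bool`) satisfying `φ`. -/
def Content [Fintype V] [DecidableEq V] (φ : PropForm V) : Finset (V → Bool) :=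
  Finset.univ.filter fun w => φ.eval w = true

/-- Information content `I(φ) = -log₂(|Content φ| / 2 ^ n)` in the extended reals,
with `I(φ) = +∞` when `Content φ = ∅`. -/
noncomputable def infoContent [Fintype V] [DecidableEq V] (φ : PropForm V) : EReal :=
  if (Content φ).card = 0 then ⊤
  else (((- Real.logb 2 (((Content φ).card : ℝ) / 2 ^ Fintype.card V)) : ℝ) : EReal)

/-- The disjunction `D 0 ∨ D 1 ∨ ⋯ ∨ D (k-1)` (left-associated), for `k ≥ 1`. -/
def bigOr {k : ℕ} (hk : 0 < k) (D : Fin k → PropForm V) : PropForm V :=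
  ((List.ofFn D).tail).foldl PropForm.or (D ⟨0, hk⟩)

/-- The conjunction `C 0 ∧ C 1 ∧ ⋯ ∧ C (m-1)` (left-associated), for `m ≥ 1`. -/
def bigAnd {m : ℕ} (hm : 0 < m) (C : Fin m → PropForm V) : PropForm V :=
  ((List.ofFn C).tail).foldl PropForm.and (C ⟨0, hm⟩)

/-- The disjunction `⋁_{i ∈ S} D i` over a nonempty finite index set `S`. -/
noncomputable def finsetOr {k : ℕ} (D : Fin k → PropForm V) (S : Finset (Fin k)) (hS : S.Nonempty) :
    PropForm V :=
  (((S.erase (S.min' hS)).toList).map D).foldl PropForm.or (D (S.min' hS))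

/-- A literal: a positive or negated atom. -/
inductive Literal (V : Type*) where
  | pos : V → Literal V
  | neg : V → Literal V

/-- The underlying atom of a literal. -/
def Literal.atom : Literal V → V
  | .pos v => v
  | .neg v => v

/-- The formula corresponding to a literal. -/
def Literal.toForm : Literal V → PropForm V
  | .pos v => .var v
  | .neg v => .not (.var v)

/-- `φ` is a literal formula: `var v` or `¬(var v)`. -/
inductive IsLiteral : PropForm V → Prop
  | var (v : V) : IsLiteral (.var v)
  | negVar (v : V) : IsLiteral (.not (.var v))

/-- `φ` is a clause: a finite disjunction of literals. -/
inductive IsClause : PropForm V → Prop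
  | lit {φ : PropForm V} : IsLiteral φ → IsClause φ
  | or {φ ψ : PropForm V} : IsClause φ → IsClause ψ → IsClause (φ.or ψ)

/-- Immediate (direct) subformula relation. -/
inductive DirectSubform : PropForm V → PropForm V → Prop
  | notArg (φ : PropForm V) : DirectSubform φ (.not φ)
  | andLeft (φ ψ : PropForm V) : DirectSubform φ (.and φ ψ)
  | andRight (φ ψ : PropForm V) : DirectSubform ψ (.and φ ψ)
  | orLeft (φ ψ : PropForm V) : DirectSubform φ (.or φ ψ)
  | orRight (φ ψ : PropForm V) : DirectSubform ψ (.or φ ψ)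

/-- `ψ` is a strict subformula of `φ`. -/
def StrictSubform (ψ φ : PropForm V) : Prop := Relation.TransGen DirectSubform ψ φ

/-- `φ` is atomic: it admits no safe cut, i.e. every strict subformula `ψ`
satisfies `I(ψ) ≥ I(φ)`. -/
def Atomic [Fintype V] [DecidableEq V] (φ : PropForm V) : Prop :=
  ∀ ψ : PropForm V, StrictSubform ψ φ → infoContent φ ≤ infoContent ψ

namespace PropForm

theorem eval_foldl_or_eq_true (w : V → Bool) (l : List (PropForm V)) (φ : PropForm V) :
    (l.foldl or φ).eval w = true ↔ ∃ ψ ∈ φ :: l, ψ.eval w = true := by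
  induction l generalizing φ with
  | nil => simp
  | cons ψ l ih =>
    simp only [List.foldl_cons, ih, List.exists_mem_cons_iff, eval, Bool.or_eq_true]
    tauto

theorem eval_bigOr {k : ℕ} (hk : 0 < k) (D : Fin k → PropForm V) (w : V → Bool) :
    (bigOr hk D).eval w = true ↔ ∃ i, (D i).eval w = true := by
  obtain ⟨k, rfl⟩ := Nat.exists_eq_add_one_of_ne_zero hk.ne'
  simp [bigOr, eval_foldl_or_eq_true, List.ofFn_succ, Fin.exists_fin_succ]

theorem eval_finsetOr {k : ℕ} (D : Fin k → PropForm V) (S : Finset (Fin k)) (hS : S.Nonempty)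
    (w : V → Bool) :
    (finsetOr D S hS).eval w = true ↔ ∃ i ∈ S, (D i).eval w = true := by
  conv_rhs => rw [← Finset.insert_erase (S.min'_mem hS)]
  simp [finsetOr, eval_foldl_or_eq_true]

end PropForm

theorem mem_Content [Fintype V] [DecidableEq V] {φ : PropForm V} {w : V → Bool} :
    w ∈ Content φ ↔ φ.eval w = true := by
  simp [Content]

theorem infoContent_lt_of_card_lt [Fintype V] [DecidableEq V] {φ ψ : PropForm V}
    (h : (Content ψ).card < (Content φ).card) : infoContent φ < infoContent ψ := by
  have hφ : (Content φ).card ≠ 0 := by omega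
  by_cases hψ : (Content ψ).card = 0
  · simp only [infoContent, hφ, hψ, if_true, if_false]
    exact EReal.coe_lt_top _
  simp only [infoContent, hφ, hψ, if_false, EReal.coe_lt_coe_iff, neg_lt_neg_iff]
  apply Real.logb_lt_logb one_lt_two (by positivity)
  gcongr

theorem gen_disj_bad_cut_general {V : Type*} [Fintype V] [DecidableEq V] {k : ℕ}
    (D : Fin k → PropForm V) (S : Finset (Fin k)) (hS : S.Nonempty)
    (h : ∃ j ∉ S, ∃ w : V → Bool,
      (D j).eval w = true ∧ ∀ i ∈ S, (D i).eval w = false) :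
    infoContent (bigOr (hS.choose.pos) D) < infoContent (finsetOr D S hS) := by
  obtain ⟨j, -, w, hwj, hwS⟩ := h
  have hsub : Content (finsetOr D S hS) ⊆ Content (bigOr hS.choose.pos D) := fun x hx => by
    obtain ⟨i, -, hi⟩ := (PropForm.eval_finsetOr D S hS x).1 (mem_Content.1 hx)
    exact mem_Content.2 ((PropForm.eval_bigOr _ D x).2 ⟨i, hi⟩)
  have hw_bigOr : w ∈ Content (bigOr hS.choose.pos D) :=
    mem_Content.2 ((PropForm.eval_bigOr _ D w).2 ⟨j, hwj⟩)
  have hw_finsetOr : w ∉ Content (finsetOr D S hS) := fun hw => by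
    obtain ⟨i, hi, hwi⟩ := (PropForm.eval_finsetOr D S hS w).1 (mem_Content.1 hw)
    simp [hwS i hi] at hwi
  exact infoContent_lt_of_card_lt <|
    Finset.card_lt_card <| (Finset.ssubset_iff_of_subset hsub).2 ⟨w, hw_bigOr, hw_finsetOr⟩

/-- Generalised indivisibility of disjunction: for formulas
`D 0, …, D (k-1)` and a nonempty proper subset `S` of indices, if some index `j ∉ S`
and world `w` satisfy `w ⊨ D j` and `w ⊭ D i` for all `i ∈ S`, then
`I(⋁_{i ∈ S} D i) > I(D 0 ∨ ⋯ ∨ D (k-1))`: extracting the sub-disjunction is a bad cut. -/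
theorem gen_disj_bad_cut {V : Type*} [Fintype V] [DecidableEq V] {k : ℕ}
    (D : Fin k → PropForm V) (S : Finset (Fin k)) (hS : S.Nonempty)
    (hS' : S ≠ Finset.univ)
    (h : ∃ j ∉ S, ∃ w : V → Bool,
      (D j).eval w = true ∧ ∀ i ∈ S, (D i).eval w = false) :
    infoContent (bigOr (hS.choose.pos) D) < infoContent (finsetOr D S hS) :=
  gen_disj_bad_cut_general D S hS h
end

section
/- Structural characterisation of atomicity (backward direction): let φ = L₁ ∨ ⋯ ∨ L_k be a single clause, i.e. a disjunction of k ≥ 1 literals whose underlying atoms are pairwise distinct. Then φ is atomic: every strict subformula ψ of φ satisfies I(ψ) ≥ I(φ), so φ admits no safe cut. -/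
variable {V : Type*}

/-!
Every strict subformula `ψ` of a clause `φ` has at most as many models as `φ`, and `I` is
antitone in the number of models. Indeed `ψ` is either a subclause of `φ`, which entails `φ`,
or the atom `v` of a negative literal `¬v` of `φ`; flipping the value of `v` matches the models
of `v` with those of `¬v`, and `¬v` entails `φ`.
-/

namespace PropForm

variable {V : Type*}

theorem strictSubform_iff {ψ φ : PropForm V} :
    StrictSubform ψ φ ↔ ∃ χ, DirectSubform χ φ ∧ (ψ = χ ∨ StrictSubform ψ χ) := by
  unfold StrictSubform
  rw [Relation.TransGen.tail'_iff]
  refine exists_congr fun χ => ?_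
  rw [Relation.reflTransGen_iff_eq_or_transGen, eq_comm]
  exact and_comm

theorem not_strictSubform_var {ψ : PropForm V} {v : V} : ¬StrictSubform ψ (var v) := by
  rw [strictSubform_iff]
  rintro ⟨_, ⟨⟩, _⟩

variable [Fintype V] [DecidableEq V]

@[simp]
theorem mem_content {φ : PropForm V} {w : V → Bool} : w ∈ Content φ ↔ φ.eval w = true :=
  Finset.mem_filter.trans (and_iff_right (Finset.mem_univ w))

theorem infoContent_le_of_card_le {φ ψ : PropForm V}
    (h : (Content ψ).card ≤ (Content φ).card) : infoContent φ ≤ infoContent ψ := by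
  unfold infoContent
  by_cases hψ : (Content ψ).card = 0
  · simp [hψ]
  have hφ : (Content φ).card ≠ 0 := by omega
  rw [if_neg hφ, if_neg hψ, EReal.coe_le_coe_iff, neg_le_neg_iff]
  gcongr
  exact one_lt_two

theorem content_subset_content_or_left (φ ψ : PropForm V) :
    Content φ ⊆ Content (φ.or ψ) := by
  intro w
  simp +contextual [eval]

theorem content_subset_content_or_right (φ ψ : PropForm V) :
    Content ψ ⊆ Content (φ.or ψ) := by
  intro w
  simp +contextual [eval]

theorem card_content_var_eq_card_content_not_var (v : V) :
    (Content (var v)).card = (Content (not (var v))).card := by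
  let flip (w : V → Bool) : V → Bool := Function.update w v !w v
  have flip_flip (w : V → Bool) : flip (flip w) = w := by simp [flip]
  exact Finset.card_equiv ⟨flip, flip, flip_flip, flip_flip⟩ fun w => by
    simp [flip, eval]

end PropForm

open PropForm

section Clauses

variable {V : Type*}

theorem Literal.isClause_toForm (L : Literal V) : IsClause L.toForm := by
  cases L with
  | pos v => exact .lit (.var v)
  | neg v => exact .lit (.negVar v)

theorem IsClause.foldl_or {a : PropForm V} (ha : IsClause a) {l : List (PropForm V)}
    (hl : ∀ x ∈ l, IsClause x) : IsClause (l.foldl PropForm.or a) := by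
  induction l generalizing a with
  | nil => exact ha
  | cons x xs ih =>
    exact ih (ha.or (hl x List.mem_cons_self)) fun y hy => hl y (List.mem_cons_of_mem _ hy)

theorem isClause_bigOr {k : ℕ} (hk : 0 < k) {D : Fin k → PropForm V} (hD : ∀ i, IsClause (D i)) :
    IsClause (bigOr hk D) := by
  refine (hD _).foldl_or fun x hx => ?_
  obtain ⟨i, rfl⟩ := List.mem_ofFn.mp (List.mem_of_mem_tail hx)
  exact hD i

variable [Fintype V] [DecidableEq V]

theorem IsClause.card_content_le_of_strictSubform {φ : PropForm V} (hφ : IsClause φ)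
    {ψ : PropForm V} (hψ : StrictSubform ψ φ) : (Content ψ).card ≤ (Content φ).card := by
  induction hφ generalizing ψ with
  | lit hl =>
    cases hl with
    | var v => exact absurd hψ not_strictSubform_var
    | negVar v =>
      obtain ⟨χ, ⟨⟩, rfl | hψ⟩ := strictSubform_iff.mp hψ
      · exact (card_content_var_eq_card_content_not_var v).le
      · exact absurd hψ not_strictSubform_var
  | @or φ₁ φ₂ _ _ ih₁ ih₂ =>
    obtain ⟨χ, hχ, rfl | hψ⟩ := strictSubform_iff.mp hψ
    all_goals cases hχ
    · exact Finset.card_le_card (content_subset_content_or_left φ₁ φ₂)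
    · exact Finset.card_le_card (content_subset_content_or_right φ₁ φ₂)
    · exact (ih₁ hψ).trans (Finset.card_le_card (content_subset_content_or_left φ₁ φ₂))
    · exact (ih₂ hψ).trans (Finset.card_le_card (content_subset_content_or_right φ₁ φ₂))

theorem IsClause.atomic {φ : PropForm V} (hφ : IsClause φ) : Atomic φ :=
  fun _ hψ => infoContent_le_of_card_le (hφ.card_content_le_of_strictSubform hψ)

end Clauses

theorem clause_atomic_general {V : Type*} [Fintype V] [DecidableEq V] {k : ℕ}
    (hk : 0 < k) (L : Fin k → Literal V) :
    Atomic (bigOr hk fun i => (L i).toForm) :=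
  (isClause_bigOr hk fun i => (L i).isClause_toForm).atomic

/-- Structural characterisation of atomicity (backward direction):
a single clause `φ = L 0 ∨ ⋯ ∨ L (k-1)` of `k ≥ 1` literals with pairwise distinct
atoms is atomic: every strict subformula `ψ` of `φ` satisfies `I(ψ) ≥ I(φ)`,
so `φ` admits no safe cut. -/
theorem clause_atomic {V : Type*} [Fintype V] [DecidableEq V] {k : ℕ}
    (hk : 0 < k) (L : Fin k → Literal V)
    (hdist : Function.Injective fun i => (L i).atom) :
    Atomic (bigOr hk fun i => (L i).toForm) :=
  clause_atomic_general hk L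
end
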